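/- arXiv:2507.03709 — 5 statements merged into one kernel-verified Lean document; each statement's English description precedes it below -/
import Mathlib

section
/- Let (S, +) be a commutative semigroup, (S, ×) a semigroup, and σ, τ ∈ Sym(S) such that (S, +, ×^σ) and (S, +, ×^τ) are semirings. Then (S, +, ×^σ) and (S, +, ×^τ) are isomorphic as semirings if and only if σ and τ lie in the same double coset of Aut(S, ×) \ Sym(S) / Aut(S, +), i.e. τ = ασβ for some α ∈ Aut(S, ×) and β ∈ Aut(S, +). -/
/-- The operation `·^σ`: `x ·^σ y = ((x σ⁻¹) · (y σ⁻¹)) σ`. -/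
def opConj {S : Type*} (σ : Equiv.Perm S) (f : S → S → S) : S → S → S :=
  fun x y => σ (f (σ.symm x) (σ.symm y))

/-- `(S, add, mul)` is a semiring: `add` is an associative commutative
operation, `mul` is associative, and `mul` distributes over `add` on both
sides. No additive identity is required. -/
def IsSemiringOps {S : Type*} (add mul : S → S → S) : Prop :=
  (∀ x y z, add (add x y) z = add x (add y z)) ∧
  (∀ x y, add x y = add y x) ∧
  (∀ x y z, mul (mul x y) z = mul x (mul y z)) ∧
  (∀ x y z, mul x (add y z) = add (mul x y) (mul x z)) ∧
  (∀ x y z, mul (add y z) x = add (mul y x) (mul z x))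

/-- The semirings `(S, add₁, mul₁)` and `(S, add₂, mul₂)` are isomorphic via a
single bijection preserving both operations. -/
def SemiringIso {S : Type*} (add₁ mul₁ add₂ mul₂ : S → S → S) : Prop :=
  ∃ φ : Equiv.Perm S, (∀ x y, φ (add₁ x y) = add₂ (φ x) (φ y)) ∧
    (∀ x y, φ (mul₁ x y) = mul₂ (φ x) (φ y))

/-- The semirings `(S, add₁, mul₁)` and `(S, add₂, mul₂)` are anti-isomorphic:
a bijection preserving addition and reversing multiplication. -/
def SemiringAntiIso {S : Type*} (add₁ mul₁ add₂ mul₂ : S → S → S) : Prop :=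
  ∃ φ : Equiv.Perm S, (∀ x y, φ (add₁ x y) = add₂ (φ x) (φ y)) ∧
    (∀ x y, φ (mul₁ x y) = mul₂ (φ y) (φ x))

/-! `Equiv.Perm S` acts on binary operations on `S` by transport of structure, `σ • f = opConj σ f`.
A bijection `φ` is then an isomorphism `(S, +, ×^σ) ≅ (S, +, ×^τ)` exactly when `φ` stabilises `+`
and `φ • σ • × = τ • ×`. For any action, some `φ ∈ H` with `φ • σ • x = τ • x` exists iff
`τ ∈ H σ Stab(x)`: take `β = φ` and `α = σ⁻¹ φ⁻¹ τ`. -/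

open MulAction

theorem DoubleCoset.mem_doubleCoset_stabilizer_iff {G X : Type*} [Group G] [MulAction G X]
    {H : Set G} {x : X} {σ τ : G} :
    τ ∈ doubleCoset σ H (stabilizer G x) ↔ ∃ φ ∈ H, φ • σ • x = τ • x := by
  rw [mem_doubleCoset]
  constructor
  · rintro ⟨β, hβ, α, hα, rfl⟩
    exact ⟨β, hβ, by rw [mul_smul, mul_smul, mem_stabilizer_iff.mp hα]⟩
  · rintro ⟨φ, hφ, hx⟩
    refine ⟨φ, hφ, σ⁻¹ * φ⁻¹ * τ, ?_, by group⟩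
    rw [SetLike.mem_coe, mem_stabilizer_iff, mul_smul, mul_smul, ← hx, inv_smul_smul,
      inv_smul_smul]

/-- A type synonym for `S → S → S`, so that `Equiv.Perm S` can act by `opConj` instead of by
the pointwise action on values. -/
def BinOp (S : Type*) : Type _ := S → S → S

namespace BinOp

variable {S : Type*}

instance : MulAction (Equiv.Perm S) (BinOp S) where
  smul := opConj
  one_smul _ := rfl
  mul_smul _ _ _ := rfl

theorem smul_def (σ : Equiv.Perm S) (f : BinOp S) : σ • f = opConj σ f := rfl

theorem smul_eq_iff {φ : Equiv.Perm S} {f g : BinOp S} :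
    φ • f = g ↔ ∀ x y, φ (f x y) = g (φ x) (φ y) := by
  refine ⟨fun h x y => by simp [← h, smul_def, opConj], fun h => ?_⟩
  funext x y
  simpa [smul_def, opConj] using h (φ.symm x) (φ.symm y)

theorem mem_stabilizer_iff {φ : Equiv.Perm S} {f : BinOp S} :
    φ ∈ stabilizer (Equiv.Perm S) f ↔ ∀ x y, φ (f x y) = f (φ x) (φ y) :=
  MulAction.mem_stabilizer_iff.trans smul_eq_iff

end BinOp

/-- The paper's `τ = ασβ`, with maps acting on the right, reads `τ = β * σ * α` in Mathlib. -/
theorem semiring_iso_iff_double_coset_general {S : Type*} (add mul : S → S → S)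
    (σ τ : Equiv.Perm S) :
    SemiringIso add (opConj σ mul) add (opConj τ mul) ↔
      ∃ α β : Equiv.Perm S,
        (∀ x y, α (mul x y) = mul (α x) (α y)) ∧
        (∀ x y, β (add x y) = add (β x) (β y)) ∧
        τ = β * σ * α := by
  let addOp : BinOp S := add
  let mulOp : BinOp S := mul
  calc SemiringIso add (opConj σ mul) add (opConj τ mul)
      ↔ ∃ φ ∈ (stabilizer (Equiv.Perm S) addOp : Set _), φ • σ • mulOp = τ • mulOp :=
        exists_congr fun _ => and_congr BinOp.mem_stabilizer_iff.symm BinOp.smul_eq_iff.symm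
    _ ↔ τ ∈ DoubleCoset.doubleCoset σ (stabilizer (Equiv.Perm S) addOp)
          (stabilizer (Equiv.Perm S) mulOp) :=
        DoubleCoset.mem_doubleCoset_stabilizer_iff.symm
    _ ↔ _ := by
        simp only [DoubleCoset.mem_doubleCoset, SetLike.mem_coe, BinOp.mem_stabilizer_iff]
        exact ⟨fun ⟨β, hβ, α, hα, h⟩ => ⟨α, β, hα, hβ, h⟩,
          fun ⟨α, β, hα, hβ, h⟩ => ⟨β, hβ, α, hα, h⟩⟩

/-- Theorem 3 of the paper: `(S, +, ×^σ)` and `(S, +, ×^τ)` are isomorphic iff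
`σ` and `τ` lie in the same double coset `Aut(S, ×) \ Sym(S) / Aut(S, +)`,
i.e. `τ = ασβ` ("first `α`, then `σ`, then `β`", so `β * σ * α` in Mathlib's
convention) for some automorphism `α` of `(S, ×)` and `β` of `(S, +)`. -/
theorem semiring_iso_iff_double_coset {S : Type*} (add mul : S → S → S)
    (haddassoc : ∀ x y z, add (add x y) z = add x (add y z))
    (haddcomm : ∀ x y, add x y = add y x)
    (hmulassoc : ∀ x y z, mul (mul x y) z = mul x (mul y z))
    (σ τ : Equiv.Perm S)
    (h1 : IsSemiringOps add (opConj σ mul))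
    (h2 : IsSemiringOps add (opConj τ mul)) :
    SemiringIso add (opConj σ mul) add (opConj τ mul) ↔
      ∃ α β : Equiv.Perm S,
        (∀ x y, α (mul x y) = mul (α x) (α y)) ∧
        (∀ x y, β (add x y) = add (β x) (β y)) ∧
        τ = β * σ * α :=
  semiring_iso_iff_double_coset_general add mul σ τ
end

section
/- Let (S, +) be a commutative semigroup, (S, ×) a semigroup, and σ, τ ∈ Sym(S) such that (S, +, ×^σ) and (S, +, ×^τ) are semirings. If τ = ασβ with α an automorphism of (S, ×) and β an automorphism of (S, +), then β is a semiring isomorphism from (S, +, ×^σ) to (S, +, ×^τ). -/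
/-! Conjugating an operation is a left action of `Equiv.Perm S` on operations; an automorphism of
`mul` fixes `mul`, so `mul ^ (β * σ * α) = (mul ^ σ) ^ β`, and every bijection `β` is an isomorphism
from any operation `f` to `f ^ β`. -/

section opConj

variable {S : Type*}

theorem opConj_mul (σ τ : Equiv.Perm S) (f : S → S → S) :
    opConj (σ * τ) f = opConj σ (opConj τ f) :=
  rfl

theorem opConj_eq_self_of_map {α : Equiv.Perm S} {f : S → S → S}
    (hα : ∀ x y, α (f x y) = f (α x) (α y)) : opConj α f = f := by
  funext x y
  simp only [opConj, hα, Equiv.apply_symm_apply]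

theorem apply_opConj_eq (σ : Equiv.Perm S) (f : S → S → S) (x y : S) :
    σ (f x y) = opConj σ f (σ x) (σ y) := by
  simp only [opConj, Equiv.symm_apply_apply]

end opConj

-- `τ = ασβ` with maps composed left to right is `β * σ * α` in Mathlib's convention.
theorem double_coset_gives_iso_general {S : Type*} (add mul : S → S → S)
    (σ τ α β : Equiv.Perm S)
    (hα : ∀ x y, α (mul x y) = mul (α x) (α y))
    (hβ : ∀ x y, β (add x y) = add (β x) (β y))
    (hτ : τ = β * σ * α) :
    (∀ x y, β (add x y) = add (β x) (β y)) ∧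
    (∀ x y, β (opConj σ mul x y) = opConj τ mul (β x) (β y)) := by
  refine ⟨hβ, fun x y => ?_⟩
  rw [hτ, opConj_mul, opConj_mul, opConj_eq_self_of_map hα]
  exact apply_opConj_eq β _ x y

/-- If `τ = ασβ` (maps composed left to right, so `β * σ * α` in Mathlib's
convention) with `α ∈ Aut(S, ×)` and `β ∈ Aut(S, +)`, then `β` is a semiring
isomorphism from `(S, +, ×^σ)` to `(S, +, ×^τ)`. -/
theorem double_coset_gives_iso {S : Type*} (add mul : S → S → S)
    (haddassoc : ∀ x y z, add (add x y) z = add x (add y z))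
    (haddcomm : ∀ x y, add x y = add y x)
    (hmulassoc : ∀ x y z, mul (mul x y) z = mul x (mul y z))
    (σ τ α β : Equiv.Perm S)
    (h1 : IsSemiringOps add (opConj σ mul))
    (h2 : IsSemiringOps add (opConj τ mul))
    (hα : ∀ x y, α (mul x y) = mul (α x) (α y))
    (hβ : ∀ x y, β (add x y) = add (β x) (β y))
    (hτ : τ = β * σ * α) :
    (∀ x y, β (add x y) = add (β x) (β y)) ∧
    (∀ x y, β (opConj σ mul x y) = opConj τ mul (β x) (β y)) :=
  double_coset_gives_iso_general add mul σ τ α β hα hβ hτ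
end

section
/- Let (S, +) be a commutative semigroup, (S, ×) a semigroup, and σ, τ ∈ Sym(S) such that (S, +, ×^σ) and (S, +, ×^τ) are semirings. Then (S, +, ×^σ) and (S, +, ×^τ) are isomorphic or anti-isomorphic as semirings if and only if σ and τ lie in the same double coset of Aut*(S, ×) \ Sym(S) / Aut(S, +), where Aut*(S, ×) is the group of automorphisms and anti-automorphisms of (S, ×). -/
/-- `φ` is an automorphism of the semigroup `(S, mul)`. -/
def IsAut {S : Type*} (mul : S → S → S) (φ : Equiv.Perm S) : Prop :=
  ∀ x y, φ (mul x y) = mul (φ x) (φ y)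

/-- `φ` is an anti-automorphism of the semigroup `(S, mul)`. -/
def IsAntiAut {S : Type*} (mul : S → S → S) (φ : Equiv.Perm S) : Prop :=
  ∀ x y, φ (mul x y) = mul (φ y) (φ x)

/-!
A bijection `φ` transports `×^σ` to `×^τ` exactly when `τ⁻¹ φ σ` is an automorphism of `(S, ×)`
(an anti-automorphism in the reversed case), since `×^σ` is `×` carried along `σ`. An
isomorphism or anti-isomorphism `φ` therefore yields `τ = φ σ α` with `α = (τ⁻¹ φ σ)⁻¹ ∈ Aut*(S, ×)`
and `φ ∈ Aut(S, +)`, and conversely `β` is an (anti-)isomorphism whenever `τ = β σ α`.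
-/

section

variable {S : Type*} {mul : S → S → S}

lemma IsAut.inv {φ : Equiv.Perm S} (h : IsAut mul φ) : IsAut mul φ⁻¹ := by
  intro x y
  apply φ.injective
  rw [h]
  simp [Equiv.Perm.inv_def]

lemma IsAntiAut.inv {φ : Equiv.Perm S} (h : IsAntiAut mul φ) : IsAntiAut mul φ⁻¹ := by
  intro x y
  apply φ.injective
  rw [h]
  simp [Equiv.Perm.inv_def]

variable (mul) (σ τ φ : Equiv.Perm S)

lemma map_opConj_iff_isAut :
    (∀ x y, φ (opConj σ mul x y) = opConj τ mul (φ x) (φ y)) ↔ IsAut mul (τ⁻¹ * φ * σ) := by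
  refine σ.symm.forall_congr fun {x} => σ.symm.forall_congr fun {y} => ?_
  simp only [opConj, Equiv.apply_symm_apply, Equiv.Perm.mul_apply, Equiv.Perm.inv_def]
  exact τ.symm_apply_eq.symm

lemma map_opConj_iff_isAntiAut :
    (∀ x y, φ (opConj σ mul x y) = opConj τ mul (φ y) (φ x)) ↔
      IsAntiAut mul (τ⁻¹ * φ * σ) := by
  refine σ.symm.forall_congr fun {x} => σ.symm.forall_congr fun {y} => ?_
  simp only [opConj, Equiv.apply_symm_apply, Equiv.Perm.mul_apply, Equiv.Perm.inv_def]
  exact τ.symm_apply_eq.symm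

end

-- The paper's `τ = ασβ` (maps acting on the right) is `β * σ * α` in Mathlib's convention.
theorem semiring_iso_or_antiIso_iff_double_coset_general {S : Type*}
    (add mul : S → S → S)
    (σ τ : Equiv.Perm S) :
    (SemiringIso add (opConj σ mul) add (opConj τ mul) ∨
     SemiringAntiIso add (opConj σ mul) add (opConj τ mul)) ↔
      ∃ α β : Equiv.Perm S,
        (IsAut mul α ∨ IsAntiAut mul α) ∧ IsAut add β ∧ τ = β * σ * α := by
  constructor
  · rintro (⟨φ, hadd, hmul⟩ | ⟨φ, hadd, hmul⟩)
    · exact ⟨(τ⁻¹ * φ * σ)⁻¹, φ,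
        Or.inl ((map_opConj_iff_isAut mul σ τ φ).1 hmul).inv, hadd, by group⟩
    · exact ⟨(τ⁻¹ * φ * σ)⁻¹, φ,
        Or.inr ((map_opConj_iff_isAntiAut mul σ τ φ).1 hmul).inv, hadd, by group⟩
  · rintro ⟨α, β, hα | hα, hβ, rfl⟩
    all_goals have hcancel : (β * σ * α)⁻¹ * β * σ = α⁻¹ := by group
    · exact Or.inl ⟨β, hβ, (map_opConj_iff_isAut mul σ _ β).2 (hcancel ▸ hα.inv)⟩
    · exact Or.inr ⟨β, hβ, (map_opConj_iff_isAntiAut mul σ _ β).2 (hcancel ▸ hα.inv)⟩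

/-- Corollary 4 of the paper: `(S, +, ×^σ)` and `(S, +, ×^τ)` are isomorphic
or anti-isomorphic iff `σ` and `τ` lie in the same double coset
`Aut*(S, ×) \ Sym(S) / Aut(S, +)`, i.e. `τ = ασβ` ("first `α`, then `σ`,
then `β`", so `β * σ * α` in Mathlib's convention) for some
`α ∈ Aut*(S, ×)` and `β ∈ Aut(S, +)`. -/
theorem semiring_iso_or_antiIso_iff_double_coset {S : Type*}
    (add mul : S → S → S)
    (haddassoc : ∀ x y z, add (add x y) z = add x (add y z))
    (haddcomm : ∀ x y, add x y = add y x)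
    (hmulassoc : ∀ x y z, mul (mul x y) z = mul x (mul y z))
    (σ τ : Equiv.Perm S)
    (h1 : IsSemiringOps add (opConj σ mul))
    (h2 : IsSemiringOps add (opConj τ mul)) :
    (SemiringIso add (opConj σ mul) add (opConj τ mul) ∨
     SemiringAntiIso add (opConj σ mul) add (opConj τ mul)) ↔
      ∃ α β : Equiv.Perm S,
        (IsAut mul α ∨ IsAntiAut mul α) ∧ IsAut add β ∧ τ = β * σ * α :=
  semiring_iso_or_antiIso_iff_double_coset_general add mul σ τ
end

section
/- Up to isomorphism, there are exactly 10 semirings with 2 elements, where a semiring is a set with a commutative semigroup addition and a semigroup multiplication that distributes over addition on both sides (no additive identity required). -/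
section Decidable

variable {S : Type*} [Fintype S] [DecidableEq S]

instance (add mul : S → S → S) : Decidable (IsSemiringOps add mul) :=
  inferInstanceAs (Decidable (_ ∧ _ ∧ _ ∧ _ ∧ _))

instance (add₁ mul₁ add₂ mul₂ : S → S → S) : Decidable (SemiringIso add₁ mul₁ add₂ mul₂) :=
  inferInstanceAs (Decidable (∃ _, _))

end Decidable

def twoElementSemirings : Finset ((Fin 2 → Fin 2 → Fin 2) × (Fin 2 → Fin 2 → Fin 2)) :=
  {(fun _ _ => 0, fun _ _ => 0),
   (fun _ _ => 0, min),
   (min, fun _ _ => 0),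
   (min, min),
   (min, max),
   (min, fun x _ => x),
   (min, fun _ y => y),
   (min, fun _ _ => 1),
   ((· + ·), fun _ _ => 0),
   ((· + ·), (· * ·))}

theorem card_twoElementSemirings : twoElementSemirings.card = 10 := by
  decide

theorem isSemiringOps_of_mem_twoElementSemirings :
    ∀ p ∈ twoElementSemirings, IsSemiringOps p.1 p.2 := by
  decide +kernel

theorem not_semiringIso_of_mem_twoElementSemirings :
    ∀ p ∈ twoElementSemirings, ∀ q ∈ twoElementSemirings, p ≠ q →
      ¬ SemiringIso p.1 p.2 q.1 q.2 := by
  decide +kernel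

theorem exists_mem_twoElementSemirings_semiringIso :
    ∀ add mul : Fin 2 → Fin 2 → Fin 2, IsSemiringOps add mul →
      ∃ p ∈ twoElementSemirings, SemiringIso add mul p.1 p.2 := by
  decide +kernel

/-- There are exactly 10 semirings with 2 elements up to isomorphism:
there is a set of 10 pairwise non-isomorphic semiring structures on `Fin 2`
such that every semiring structure on `Fin 2` is isomorphic to one of them. -/
theorem card_semirings_two : ∃ reps :
    Finset ((Fin 2 → Fin 2 → Fin 2) × (Fin 2 → Fin 2 → Fin 2)),
    reps.card = 10 ∧
    (∀ p ∈ reps, IsSemiringOps p.1 p.2) ∧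
    (∀ p ∈ reps, ∀ q ∈ reps, p ≠ q → ¬ SemiringIso p.1 p.2 q.1 q.2) ∧
    (∀ add mul : Fin 2 → Fin 2 → Fin 2, IsSemiringOps add mul →
      ∃ p ∈ reps, SemiringIso add mul p.1 p.2) :=
  ⟨twoElementSemirings, card_twoElementSemirings, isSemiringOps_of_mem_twoElementSemirings,
    not_semiringIso_of_mem_twoElementSemirings, exists_mem_twoElementSemirings_semiringIso⟩
end

section
/- Up to isomorphism, there are exactly 6 additively idempotent semirings (ai-semirings) with 2 elements, where an ai-semiring is a semiring satisfying x + x = x for all x. -/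
section Transport

variable {S : Type*} {add mul : S → S → S}

theorem semiringIso_opConj (σ : Equiv.Perm S) :
    SemiringIso add mul (opConj σ add) (opConj σ mul) :=
  ⟨σ, fun x y => by simp [opConj], fun x y => by simp [opConj]⟩

theorem IsSemiringOps.opConj (h : IsSemiringOps add mul) (σ : Equiv.Perm S) :
    IsSemiringOps (opConj σ add) (opConj σ mul) := by
  obtain ⟨add_assoc, add_comm, mul_assoc, left_distrib, right_distrib⟩ := h
  refine ⟨?_, ?_, ?_, ?_, ?_⟩ <;> intros <;> simp [_root_.opConj, *]

end Transport

section LinearOrder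

variable {α β : Type*} [LinearOrder α] [LinearOrder β]

theorem monotone_of_map_min {f : α → β} (hf : ∀ a b, f (min a b) = min (f a) (f b)) :
    Monotone f := fun a b hab =>
  calc f a = f (min a b) := by rw [min_eq_left hab]
    _ = min (f a) (f b) := hf a b
    _ ≤ f b := min_le_right _ _

theorem isSemiringOps_min_iff {mul : α → α → α} :
    IsSemiringOps min mul ↔ (∀ x y z, mul (mul x y) z = mul x (mul y z)) ∧
      (∀ x, Monotone (mul x)) ∧ ∀ y, Monotone (mul · y) := by
  refine ⟨fun ⟨_, _, mul_assoc, left_distrib, right_distrib⟩ =>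
    ⟨mul_assoc, fun x => monotone_of_map_min (left_distrib x),
      fun y => monotone_of_map_min fun a b => right_distrib y a b⟩, ?_⟩
  rintro ⟨mul_assoc, mono_left, mono_right⟩
  exact ⟨min_assoc, min_comm, mul_assoc, fun x _ _ => (mono_left x).map_min,
    fun y _ _ => (mono_right y).map_min⟩

theorem eq_of_semiringIso_min [WellFoundedLT α] {mul₁ mul₂ : α → α → α}
    (h : SemiringIso min mul₁ min mul₂) : mul₁ = mul₂ := by
  obtain ⟨φ, map_min, map_mul⟩ := h
  have symm_map_min (a b : α) : φ.symm (min a b) = min (φ.symm a) (φ.symm b) :=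
    φ.injective (by simp [map_min])
  have hφ : ⇑φ = id := congrArg DFunLike.coe
    (Subsingleton.elim (φ.toOrderIso (monotone_of_map_min map_min)
      (monotone_of_map_min symm_map_min)) (OrderIso.refl α))
  funext x y
  simpa [hφ] using map_mul x y

end LinearOrder

theorem opConj_revPerm_max {n : ℕ} : opConj Fin.revPerm (max : Fin n → Fin n → Fin n) = min := by
  funext x y
  simp [opConj, Fin.rev_anti.map_max]

def twoElementMuls : Finset (Fin 2 → Fin 2 → Fin 2) :=
  {fun _ _ => 0, min, fun x _ => x, fun _ y => y, max, fun _ _ => 1}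

theorem isSemiringOps_min_iff_mem_twoElementMuls {mul : Fin 2 → Fin 2 → Fin 2} :
    IsSemiringOps min mul ↔ mul ∈ twoElementMuls := by
  rw [isSemiringOps_min_iff]
  revert mul
  unfold Monotone
  decide

theorem exists_opConj_eq_min {add : Fin 2 → Fin 2 → Fin 2} (comm : ∀ x y, add x y = add y x)
    (idem : ∀ x, add x x = x) : ∃ σ : Equiv.Perm (Fin 2), opConj σ add = min := by
  have : add = min ∨ add = max := by
    revert add
    decide
  rcases this with rfl | rfl
  · exact ⟨1, rfl⟩
  · exact ⟨Fin.revPerm, opConj_revPerm_max⟩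

/-- There are exactly 6 additively idempotent semirings (`x + x = x`) with 2
elements up to isomorphism. -/
theorem card_ai_semirings_two : ∃ reps :
    Finset ((Fin 2 → Fin 2 → Fin 2) × (Fin 2 → Fin 2 → Fin 2)),
    reps.card = 6 ∧
    (∀ p ∈ reps, IsSemiringOps p.1 p.2 ∧ ∀ x, p.1 x x = x) ∧
    (∀ p ∈ reps, ∀ q ∈ reps, p ≠ q → ¬ SemiringIso p.1 p.2 q.1 q.2) ∧
    (∀ add mul : Fin 2 → Fin 2 → Fin 2, IsSemiringOps add mul →
      (∀ x, add x x = x) → ∃ p ∈ reps, SemiringIso add mul p.1 p.2) := by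
  refine ⟨twoElementMuls.map ⟨(min, ·), Prod.mk_right_injective _⟩, ?_, ?_, ?_, ?_⟩
  · rw [Finset.card_map]
    rfl
  · simp only [Finset.mem_map, Function.Embedding.coeFn_mk]
    rintro _ ⟨mul, hmul, rfl⟩
    exact ⟨isSemiringOps_min_iff_mem_twoElementMuls.mpr hmul, min_self⟩
  · simp only [Finset.mem_map, Function.Embedding.coeFn_mk]
    rintro _ ⟨mul₁, -, rfl⟩ _ ⟨mul₂, -, rfl⟩ hne hiso
    exact hne (congrArg _ (eq_of_semiringIso_min hiso))
  · intro add mul hS idem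
    obtain ⟨σ, hσ⟩ := exists_opConj_eq_min hS.2.1 idem
    have hSσ := hS.opConj σ
    rw [hσ] at hSσ
    refine ⟨(min, opConj σ mul), Finset.mem_map_of_mem _
      (isSemiringOps_min_iff_mem_twoElementMuls.mp hSσ), ?_⟩
    simpa only [hσ] using semiringIso_opConj (add := add) (mul := mul) σ
end
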